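/- arXiv:2505.12885 — 3 statements merged into one kernel-verified Lean document; each statement's English description precedes it below -/
import Mathlib

section
/- For x ≥ φ_t, the event {A_t > x} equals the intersection over i from θ_t(x) to k_t of the events {D_i > (k_t - i)τ + φ_t}; consequently Pr(A_t > x) = Pr(⋂_{i=θ_t(x)}^{k_t} {D_i > (k_t - i)τ + φ_t}). For x < φ_t, Pr(A_t > x) = 1. -/
open MeasureTheory
open scoped Classical

/-- The set of indices of packets (generated at times `nτ`, with delays `D n`)
that have arrived at the receiver by time `t`. -/
def arrivalSet {Ω : Type*} (τ : ℝ) (D : ℕ → Ω → ℝ) (t : ℝ) (ω : Ω) : Set ℕ :=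
  {n | (n : ℝ) * τ + D n ω ≤ t}

/-- The age of information at time `t`: `t - α_{J_t}` where `J_t` is the index of the
latest packet arrived by time `t`; `∞` if no packet has arrived. -/
noncomputable def AoI {Ω : Type*} (τ : ℝ) (D : ℕ → Ω → ℝ) (t : ℝ) (ω : Ω) : EReal :=
  if (arrivalSet τ D t ω).Nonempty then
    ((t - (sSup (arrivalSet τ D t ω) : ℕ) * τ : ℝ) : EReal)
  else ⊤

/-- For `x ≥ φ_t`, the event `{A_t > x}` equals
`⋂_{i=θ_t(x)}^{k_t} {D_i > (k_t - i)τ + φ_t}` (hence their probabilities coincide),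
and for `x < φ_t`, `Pr(A_t > x) = 1`. -/
theorem stmt3 {Ω : Type*} [MeasurableSpace Ω] (ℙ : Measure Ω) [IsProbabilityMeasure ℙ]
    (τ : ℝ) (hτ : 0 < τ) (D : ℕ → Ω → ℝ) (hD : ∀ n ω, 0 ≤ D n ω)
    (t x : ℝ) (ht : 0 ≤ t) (hx : 0 ≤ x) :
    (t - (⌊t / τ⌋ : ℝ) * τ ≤ x →
      ({ω | (x : EReal) < AoI τ D t ω} =
        {ω | ∀ i : ℕ, max 0 ⌈(t - x) / τ⌉ ≤ (i : ℤ) → (i : ℤ) ≤ ⌊t / τ⌋ →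
          ((⌊t / τ⌋ : ℝ) - (i : ℝ)) * τ + (t - (⌊t / τ⌋ : ℝ) * τ) < D i ω} ∧
       ℙ {ω | (x : EReal) < AoI τ D t ω} =
        ℙ {ω | ∀ i : ℕ, max 0 ⌈(t - x) / τ⌉ ≤ (i : ℤ) → (i : ℤ) ≤ ⌊t / τ⌋ →
          ((⌊t / τ⌋ : ℝ) - (i : ℝ)) * τ + (t - (⌊t / τ⌋ : ℝ) * τ) < D i ω})) ∧
    (x < t - (⌊t / τ⌋ : ℝ) * τ → ℙ {ω | (x : EReal) < AoI τ D t ω} = 1) := by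
  -- Members of the arrival set have index at most ⌊t/τ⌋
  have hbddk : ∀ ω, ∀ n : ℕ, n ∈ arrivalSet τ D t ω → (n : ℤ) ≤ ⌊t / τ⌋ := by
    intro ω n hn
    have h1 : (n : ℝ) * τ ≤ t := le_trans (le_add_of_nonneg_right (hD n ω)) hn
    have h2 : (n : ℝ) ≤ t / τ := (le_div_iff₀ hτ).2 h1
    exact Int.le_floor.2 (by exact_mod_cast h2)
  have hbdd : ∀ ω, BddAbove (arrivalSet τ D t ω) := by
    intro ω
    refine ⟨(⌊t / τ⌋).toNat, fun n hn => ?_⟩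
    have := hbddk ω n hn
    omega
  -- Characterization of the event {AoI > x}
  have key : ∀ ω, ((x : EReal) < AoI τ D t ω ↔
      ∀ n : ℕ, (n : ℝ) * τ + D n ω ≤ t → (n : ℝ) * τ < t - x) := by
    intro ω
    unfold AoI
    by_cases h : (arrivalSet τ D t ω).Nonempty
    · rw [if_pos h, EReal.coe_lt_coe_iff]
      have hNmem : sSup (arrivalSet τ D t ω) ∈ arrivalSet τ D t ω :=
        Nat.sSup_mem h (hbdd ω)
      constructor
      · intro hlt n hn
        have hnN : n ≤ sSup (arrivalSet τ D t ω) := le_csSup (hbdd ω) hn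
        have h3 : (n : ℝ) ≤ ((sSup (arrivalSet τ D t ω) : ℕ) : ℝ) := by
          exact_mod_cast hnN
        have : (n : ℝ) * τ ≤ ((sSup (arrivalSet τ D t ω) : ℕ) : ℝ) * τ := by nlinarith
        linarith
      · intro hall
        have := hall _ hNmem
        linarith
    · rw [if_neg h]
      simp only [EReal.coe_lt_top, true_iff]
      intro n hn
      exact absurd ⟨n, hn⟩ h
  constructor
  · intro hφ
    have hset : {ω | (x : EReal) < AoI τ D t ω} =
        {ω | ∀ i : ℕ, max 0 ⌈(t - x) / τ⌉ ≤ (i : ℤ) → (i : ℤ) ≤ ⌊t / τ⌋ →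
          ((⌊t / τ⌋ : ℝ) - (i : ℝ)) * τ + (t - (⌊t / τ⌋ : ℝ) * τ) < D i ω} := by
      ext ω
      simp only [Set.mem_setOf_eq]
      rw [key ω]
      constructor
      · intro H i hi1 hi2
        have hceil : ⌈(t - x) / τ⌉ ≤ (i : ℤ) := le_trans (le_max_right _ _) hi1
        have hge : (t - x) / τ ≤ (i : ℝ) := by
          have := Int.ceil_le.1 hceil
          exact_mod_cast this
        have hix : t - x ≤ (i : ℝ) * τ := by
          rw [div_le_iff₀ hτ] at hge; linarith
        by_contra hcon
        push_neg at hcon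
        have hmem : (i : ℝ) * τ + D i ω ≤ t := by nlinarith
        have := H i hmem
        linarith
      · intro H n hn
        by_contra hcon
        push_neg at hcon
        have hnk : (n : ℤ) ≤ ⌊t / τ⌋ := hbddk ω n hn
        have hceil : ⌈(t - x) / τ⌉ ≤ (n : ℤ) := by
          apply Int.ceil_le.2
          rw [div_le_iff₀ hτ]
          push_cast
          linarith
        have hθ : max 0 ⌈(t - x) / τ⌉ ≤ (n : ℤ) := by
          apply max_le (by positivity) hceil
        have := H n hθ hnk
        nlinarith
    exact ⟨hset, by rw [hset]⟩
  · intro hφ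
    have : {ω | (x : EReal) < AoI τ D t ω} = Set.univ := by
      ext ω
      simp only [Set.mem_univ, iff_true, Set.mem_setOf_eq]
      rw [key ω]
      intro n hn
      have hnk : (n : ℤ) ≤ ⌊t / τ⌋ := hbddk ω n hn
      have : (n : ℝ) ≤ (⌊t / τ⌋ : ℝ) := by exact_mod_cast hnk
      nlinarith
    rw [this, measure_univ]
end

section
/- Consider two systems with the same packet generation times α_n = nτ and delay sequences (D_n^{(1)}) and (D_n^{(2)}). If for every m ≥ 0 the vector (D_0^{(1)},…,D_m^{(1)}) is smaller than (D_0^{(2)},…,D_m^{(2)}) in the PQD order, then for every t ≥ 0 the AoI satisfies A_t^{(1)} ≤_st A_t^{(2)}, i.e., Pr(A_t^{(1)} > x) ≤ Pr(A_t^{(2)} > x) for all x ≥ 0. -/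
open MeasureTheory
open scoped Classical

theorem aoi_gt_iff {Ω : Type*} {τ : ℝ} (hτ : 0 < τ) {D : ℕ → Ω → ℝ}
    (hD : ∀ n ω, 0 ≤ D n ω) (t x : ℝ) (ω : Ω) :
    (x : EReal) < AoI τ D t ω ↔ ∀ n : ℕ, t - x ≤ (n : ℝ) * τ → t - (n : ℝ) * τ < D n ω := by
  have hbdd : BddAbove (arrivalSet τ D t ω) := by
    refine ⟨Nat.ceil (t / τ), fun n hn => ?_⟩
    have h1 : (n : ℝ) * τ ≤ t := by have := hD n ω; simpa using le_trans (by linarith) hn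
    have h2 : (n : ℝ) ≤ t / τ := (le_div_iff₀ hτ).2 h1
    exact_mod_cast Nat.cast_le.mp (le_trans h2 (Nat.le_ceil _))
  by_cases hne : (arrivalSet τ D t ω).Nonempty
  · set N := sSup (arrivalSet τ D t ω) with hN
    have hmem : N ∈ arrivalSet τ D t ω := Nat.sSup_mem hne hbdd
    rw [AoI, if_pos hne, ← hN, EReal.coe_lt_coe_iff]
    constructor
    · intro h n hn
      by_contra h'
      push_neg at h'
      have hmem' : n ∈ arrivalSet τ D t ω := by
        simp only [arrivalSet, Set.mem_setOf_eq]; linarith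
      have hle : n ≤ N := le_csSup hbdd hmem'
      have : (n : ℝ) * τ ≤ (N : ℝ) * τ := by
        have : (n : ℝ) ≤ (N : ℝ) := Nat.cast_le.2 hle
        nlinarith
      linarith
    · intro h
      have hNarr : (N : ℝ) * τ + D N ω ≤ t := hmem
      have : ¬ (t - x ≤ (N : ℝ) * τ) := by
        intro hc
        have := h N hc
        linarith
      push_neg at this
      linarith
  · rw [AoI, if_neg hne]
    constructor
    · intro _ n _
      have : ¬ ((n : ℝ) * τ + D n ω ≤ t) := fun hc => hne ⟨n, hc⟩
      push_neg at this
      linarith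
    · intro _
      exact EReal.coe_lt_top x

theorem event_eq {Ω : Type*} {τ : ℝ} (hτ : 0 < τ) {D : ℕ → Ω → ℝ}
    (hD : ∀ n ω, 0 ≤ D n ω) (t x : ℝ) (ht : 0 ≤ t) :
    {ω | (x : EReal) < AoI τ D t ω} =
      {ω | ∀ i : Fin ((⌊t / τ⌋.toNat) + 1),
        (if t - x ≤ (i : ℝ) * τ then t - (i : ℝ) * τ else -1) < D (i : ℕ) ω} := by
  have hdiv : 0 ≤ t / τ := div_nonneg ht hτ.le
  have hM : ((⌊t / τ⌋.toNat : ℕ) : ℝ) = (⌊t / τ⌋ : ℝ) := by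
    exact_mod_cast congrArg Int.cast (Int.toNat_of_nonneg (Int.floor_nonneg.2 hdiv))
  ext ω
  simp only [Set.mem_setOf_eq, aoi_gt_iff hτ hD t x ω]
  constructor
  · intro h i
    split_ifs with hc
    · exact h i hc
    · exact lt_of_lt_of_le (by norm_num) (hD i ω)
  · intro h n hn
    by_cases hle : n ≤ ⌊t / τ⌋.toNat
    · have := h ⟨n, Nat.lt_succ_of_le hle⟩
      simpa [hn] using this
    · push_neg at hle
      have h1 : ((⌊t / τ⌋.toNat : ℕ) : ℝ) + 1 ≤ (n : ℝ) := by exact_mod_cast hle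
      have h2 : t / τ < (⌊t / τ⌋ : ℝ) + 1 := Int.lt_floor_add_one _
      have h3 : t < (n : ℝ) * τ := by
        rw [hM] at h1
        have : t / τ < (n : ℝ) := by linarith
        calc t = t / τ * τ := by field_simp
        _ < (n : ℝ) * τ := by nlinarith
      linarith [hD n ω]

/-- If for every `m` the delay vector `(D_0^{(1)},…,D_m^{(1)})` is smaller
than `(D_0^{(2)},…,D_m^{(2)})` in the PQD order, then `A_t^{(1)} ≤_st A_t^{(2)}` for all
`t ≥ 0`, i.e. `Pr(A_t^{(1)} > x) ≤ Pr(A_t^{(2)} > x)` for all `x ≥ 0`. -/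
theorem stmt11 {Ω₁ Ω₂ : Type*} [MeasurableSpace Ω₁] [MeasurableSpace Ω₂]
    (ℙ₁ : Measure Ω₁) (ℙ₂ : Measure Ω₂) [IsProbabilityMeasure ℙ₁] [IsProbabilityMeasure ℙ₂]
    (τ : ℝ) (hτ : 0 < τ) (D₁ : ℕ → Ω₁ → ℝ) (D₂ : ℕ → Ω₂ → ℝ)
    (hD₁ : ∀ n ω, 0 ≤ D₁ n ω) (hD₂ : ∀ n ω, 0 ≤ D₂ n ω)
    (hmeas₁ : ∀ n, Measurable (D₁ n)) (hmeas₂ : ∀ n, Measurable (D₂ n))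
    (hlow : ∀ (m : ℕ) (x : Fin (m + 1) → ℝ),
      ℙ₁ {ω | ∀ i : Fin (m + 1), D₁ (i : ℕ) ω ≤ x i} ≤
        ℙ₂ {ω | ∀ i : Fin (m + 1), D₂ (i : ℕ) ω ≤ x i})
    (hup : ∀ (m : ℕ) (x : Fin (m + 1) → ℝ),
      ℙ₁ {ω | ∀ i : Fin (m + 1), x i < D₁ (i : ℕ) ω} ≤
        ℙ₂ {ω | ∀ i : Fin (m + 1), x i < D₂ (i : ℕ) ω}) :
    ∀ t x : ℝ, 0 ≤ t → 0 ≤ x →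
      ℙ₁ {ω | (x : EReal) < AoI τ D₁ t ω} ≤ ℙ₂ {ω | (x : EReal) < AoI τ D₂ t ω} := by
  intro t x ht hx
  rw [event_eq hτ hD₁ t x ht, event_eq hτ hD₂ t x ht]
  exact hup (⌊t / τ⌋.toNat) (fun i => if t - x ≤ (i : ℝ) * τ then t - (i : ℝ) * τ else -1)
end

section
/- Among all delay sequences with a fixed common marginal distribution, the i.i.d. delay sequence minimizes the AoI in the usual stochastic order: if (D_n^{(1)}) are mutually independent with D_n^{(1)} =_d D_n^{(2)} for each n, and each finite vector (D_0^{(2)},…,D_m^{(2)}) is positively quadrant dependent (i.e., ≥_PQD the vector of independent copies of its marginals), then A_t^{(1)} ≤_st A_t^{(2)} for all t ≥ 0. -/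
/-!
The event `{x < A_t}` says that no packet generated in `[t - x, t]` has arrived by time `t`,
i.e. `D_n > t - nτ` for the finitely many `n ≤ ⌊t/τ⌋` with `nτ ≥ t - x`. It is therefore an
upper orthant event of `(D_0, …, D_{⌊t/τ⌋})`, whose probability is the product of its marginal
probabilities for independent delays and at least that product for positively quadrant
dependent ones.
-/

open MeasureTheory
open scoped Classical

namespace ProbabilityTheory

theorem iIndepFun.measure_upperOrthant_le {ι Ω₁ Ω₂ : Type*} [Fintype ι]
    [MeasurableSpace Ω₁] [MeasurableSpace Ω₂] {ℙ₁ : Measure Ω₁} {ℙ₂ : Measure Ω₂}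
    {D₁ : ι → Ω₁ → ℝ} {D₂ : ι → Ω₂ → ℝ} (hindep : iIndepFun D₁ ℙ₁)
    (hmeas₁ : ∀ i, Measurable (D₁ i)) (hmeas₂ : ∀ i, Measurable (D₂ i))
    (hmarg : ∀ i, ℙ₁.map (D₁ i) = ℙ₂.map (D₂ i)) (c : ι → ℝ)
    (hPQD : ∏ i, ℙ₂ {ω | c i < D₂ i ω} ≤ ℙ₂ {ω | ∀ i, c i < D₂ i ω}) :
    ℙ₁ {ω | ∀ i, c i < D₁ i ω} ≤ ℙ₂ {ω | ∀ i, c i < D₂ i ω} := by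
  have hmarg_Ioi (i : ι) : ℙ₁ (D₁ i ⁻¹' Set.Ioi (c i)) = ℙ₂ (D₂ i ⁻¹' Set.Ioi (c i)) := by
    rw [← Measure.map_apply (hmeas₁ i) measurableSet_Ioi,
      ← Measure.map_apply (hmeas₂ i) measurableSet_Ioi, hmarg i]
  calc ℙ₁ {ω | ∀ i, c i < D₁ i ω}
      = ℙ₁ (⋂ i ∈ Finset.univ, D₁ i ⁻¹' Set.Ioi (c i)) := by
        congr 1; ext ω; simp
    _ = ∏ i, ℙ₁ (D₁ i ⁻¹' Set.Ioi (c i)) :=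
        hindep.measure_inter_preimage_eq_mul _ fun i _ => measurableSet_Ioi
    _ = ∏ i, ℙ₂ {ω | c i < D₂ i ω} := Finset.prod_congr rfl fun i _ => hmarg_Ioi i
    _ ≤ ℙ₂ {ω | ∀ i, c i < D₂ i ω} := hPQD

end ProbabilityTheory

section AoI

variable {Ω : Type*} {τ : ℝ} {D : ℕ → Ω → ℝ}

lemma le_floor_of_mem_arrivalSet (hτ : 0 < τ) (hD : ∀ n ω, 0 ≤ D n ω) {t : ℝ} {ω : Ω} {n : ℕ}
    (hn : n ∈ arrivalSet τ D t ω) : n ≤ ⌊t / τ⌋₊ :=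
  Nat.le_floor <| (le_div_iff₀ hτ).2 <| le_trans (by linarith [hD n ω]) hn

lemma coe_lt_AoI_iff (hτ : 0 < τ) (hD : ∀ n ω, 0 ≤ D n ω) (t x : ℝ) (ω : Ω) :
    (x : EReal) < AoI τ D t ω ↔ ∀ n ∈ arrivalSet τ D t ω, x < t - n * τ := by
  rw [AoI]
  split_ifs with hne
  · have hbdd : BddAbove (arrivalSet τ D t ω) :=
      ⟨⌊t / τ⌋₊, fun n hn => le_floor_of_mem_arrivalSet hτ hD hn⟩
    have hlast := Nat.sSup_mem hne hbdd
    rw [EReal.coe_lt_coe_iff]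
    refine ⟨fun h n hn => ?_, fun h => h _ hlast⟩
    have : (n : ℝ) ≤ (sSup (arrivalSet τ D t ω) : ℕ) := by exact_mod_cast le_csSup hbdd hn
    nlinarith
  · simp only [Set.not_nonempty_iff_eq_empty.1 hne, Set.mem_empty_iff_false, IsEmpty.forall_iff,
      implies_true, iff_true]
    exact EReal.coe_lt_top x

/-- The threshold `-1`, below every (nonnegative) delay, encodes "no constraint on packet `n`". -/
noncomputable def ageThreshold (τ t x : ℝ) (n : ℕ) : ℝ :=
  if x < t - n * τ then -1 else t - n * τ

lemma coe_lt_AoI_iff_forall_ageThreshold_lt (hτ : 0 < τ) (hD : ∀ n ω, 0 ≤ D n ω)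
    (t x : ℝ) (ω : Ω) :
    (x : EReal) < AoI τ D t ω ↔
      ∀ i : Fin (⌊t / τ⌋₊ + 1), ageThreshold τ t x i < D i ω := by
  rw [coe_lt_AoI_iff hτ hD]
  constructor
  · intro h i
    unfold ageThreshold
    split_ifs with hx
    · linarith [hD i ω]
    · by_contra! hle
      exact hx (h i (show ((i : ℕ) : ℝ) * τ + D i ω ≤ t by linarith))
  · intro h n hn
    have hlt := h ⟨n, Nat.lt_succ_of_le (le_floor_of_mem_arrivalSet hτ hD hn)⟩
    unfold ageThreshold at hlt
    split_ifs at hlt with hx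
    · exact hx
    · have hn : (n : ℝ) * τ + D n ω ≤ t := hn
      linarith

end AoI

theorem stmt12_general {Ω₁ Ω₂ : Type*} [MeasurableSpace Ω₁] [MeasurableSpace Ω₂]
    (ℙ₁ : Measure Ω₁) (ℙ₂ : Measure Ω₂)
    (τ : ℝ) (hτ : 0 < τ) (D₁ : ℕ → Ω₁ → ℝ) (D₂ : ℕ → Ω₂ → ℝ)
    (hD₁ : ∀ n ω, 0 ≤ D₁ n ω) (hD₂ : ∀ n ω, 0 ≤ D₂ n ω)
    (hmeas₁ : ∀ n, Measurable (D₁ n)) (hmeas₂ : ∀ n, Measurable (D₂ n))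
    (hindep : ProbabilityTheory.iIndepFun D₁ ℙ₁)
    (hmarg : ∀ n : ℕ, Measure.map (D₁ n) ℙ₁ = Measure.map (D₂ n) ℙ₂)
    (hPQDup : ∀ (m : ℕ) (x : Fin (m + 1) → ℝ),
      (∏ i : Fin (m + 1), ℙ₂ {ω | x i < D₂ (i : ℕ) ω}) ≤
        ℙ₂ {ω | ∀ i : Fin (m + 1), x i < D₂ (i : ℕ) ω}) :
    ∀ t x : ℝ, 0 ≤ t →
      ℙ₁ {ω | (x : EReal) < AoI τ D₁ t ω} ≤ ℙ₂ {ω | (x : EReal) < AoI τ D₂ t ω} := by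
  intro t x _
  simp only [coe_lt_AoI_iff_forall_ageThreshold_lt hτ hD₁,
    coe_lt_AoI_iff_forall_ageThreshold_lt hτ hD₂]
  exact (hindep.precomp Fin.val_injective).measure_upperOrthant_le
    (fun i => hmeas₁ i) (fun i => hmeas₂ i) (fun i => hmarg i) _ (hPQDup _ _)

/-- Among delay sequences with a fixed common marginal distribution, the
i.i.d. sequence minimizes the AoI in the usual stochastic order: if `(D_n^{(1)})` are
mutually independent with the same marginals as `(D_n^{(2)})`, and every finite vector of
`(D_n^{(2)})` is positively quadrant dependent (its lower and upper orthant probabilities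
dominate the corresponding products of marginals), then `A_t^{(1)} ≤_st A_t^{(2)}`. -/
theorem stmt12 {Ω₁ Ω₂ : Type*} [MeasurableSpace Ω₁] [MeasurableSpace Ω₂]
    (ℙ₁ : Measure Ω₁) (ℙ₂ : Measure Ω₂) [IsProbabilityMeasure ℙ₁] [IsProbabilityMeasure ℙ₂]
    (τ : ℝ) (hτ : 0 < τ) (D₁ : ℕ → Ω₁ → ℝ) (D₂ : ℕ → Ω₂ → ℝ)
    (hD₁ : ∀ n ω, 0 ≤ D₁ n ω) (hD₂ : ∀ n ω, 0 ≤ D₂ n ω)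
    (hmeas₁ : ∀ n, Measurable (D₁ n)) (hmeas₂ : ∀ n, Measurable (D₂ n))
    (hindep : ProbabilityTheory.iIndepFun D₁ ℙ₁)
    (hmarg : ∀ n : ℕ, Measure.map (D₁ n) ℙ₁ = Measure.map (D₂ n) ℙ₂)
    (hPQDlow : ∀ (m : ℕ) (x : Fin (m + 1) → ℝ),
      (∏ i : Fin (m + 1), ℙ₂ {ω | D₂ (i : ℕ) ω ≤ x i}) ≤
        ℙ₂ {ω | ∀ i : Fin (m + 1), D₂ (i : ℕ) ω ≤ x i})
    (hPQDup : ∀ (m : ℕ) (x : Fin (m + 1) → ℝ),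
      (∏ i : Fin (m + 1), ℙ₂ {ω | x i < D₂ (i : ℕ) ω}) ≤
        ℙ₂ {ω | ∀ i : Fin (m + 1), x i < D₂ (i : ℕ) ω}) :
    ∀ t x : ℝ, 0 ≤ t →
      ℙ₁ {ω | (x : EReal) < AoI τ D₁ t ω} ≤ ℙ₂ {ω | (x : EReal) < AoI τ D₂ t ω} :=
  stmt12_general ℙ₁ ℙ₂ τ hτ D₁ D₂ hD₁ hD₂ hmeas₁ hmeas₂ hindep hmarg hPQDup
end
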